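/- arXiv:2408.05503 — 2 statements merged into one kernel-verified Lean document; each statement's English description precedes it below -/
import Mathlib

section
/- (Mutual disentanglement of optimal representations.) Let V, T be random variables, and let V_S = f_S(V) and V_X = f_X(V) be deterministic functions of V. If I(V; V_S | T) = 0 and I(T; V_X) = 0, then I(V_S; V_X) = 0. Symmetrically, if T_S = g_S(T) and T_X = g_X(T) are deterministic functions of T with I(T; T_S | V) = 0 and I(V; T_X) = 0, then I(T_S; T_X) = 0. -/
/-! Mutual information is the sum `∑ P(x) P(y) klFun (P(x, y) / (P(x) P(y)))` of nonnegative
terms, so it vanishes exactly when the joint law is the product of the marginals. Thus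
`I(V; f_S V | T) = 0` says that, given `T = t`, `V` is independent of its own function `f_S V`;
then `f_S V` is independent of every function of `V`, in particular of `f_X V`. Averaging over
`T`, which is independent of `f_X V` since `I(T; f_X V) = 0`, gives
`P(a, b) = ∑ₜ P(t) Pₜ(a) Pₜ(b) = ∑ₜ P(t) Pₜ(a) P(b) = P(a) P(b)`. -/

open MeasureTheory ProbabilityTheory

namespace DisNCL

variable {Ω : Type*} [MeasurableSpace Ω]

/-- The probability that a random variable `X` takes the value `x`. -/
noncomputable def pr {S : Type*} (μ : Measure Ω) (X : Ω → S) (x : S) : ℝ :=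
  (μ {ω | X ω = x}).toReal

/-- Shannon entropy `H(X)` of a finitely-valued random variable. -/
noncomputable def H {S : Type*} [Fintype S] (μ : Measure Ω) (X : Ω → S) : ℝ :=
  -∑ x, pr μ X x * Real.log (pr μ X x)

/-- Conditional entropy `H(X | Y) = ∑ y P(Y = y) H(X | Y = y)`, where the inner entropy
is taken under the conditional measure given `Y = y`. -/
noncomputable def condH {S T : Type*} [Fintype S] [Fintype T]
    (μ : Measure Ω) (X : Ω → S) (Y : Ω → T) : ℝ :=
  ∑ y, pr μ Y y * H (ProbabilityTheory.cond μ {ω | Y ω = y}) X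

/-- Mutual information `I(X;Y) = H(X) + H(Y) - H(X,Y)`. -/
noncomputable def MI {S T : Type*} [Fintype S] [Fintype T]
    (μ : Measure Ω) (X : Ω → S) (Y : Ω → T) : ℝ :=
  H μ X + H μ Y - H μ (fun ω => (X ω, Y ω))

/-- Conditional mutual information `I(X;Y|Z) = ∑ z P(Z = z) I(X;Y | Z = z)`, where the
inner mutual information is taken under the conditional measure given `Z = z`. -/
noncomputable def CMI {S T U : Type*} [Fintype S] [Fintype T] [Fintype U]
    (μ : Measure Ω) (X : Ω → S) (Y : Ω → T) (Z : Ω → U) : ℝ :=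
  ∑ z, pr μ Z z * MI (ProbabilityTheory.cond μ {ω | Z ω = z}) X Y

/-- `X` and `Y` are conditionally independent given `Z`
(written `X ⊥ Y | Z`): for all values,
`P(X = x, Y = y, Z = z) ⬝ P(Z = z) = P(X = x, Z = z) ⬝ P(Y = y, Z = z)`. -/
def CondIndep {S T U : Type*} (μ : Measure Ω) (X : Ω → S) (Y : Ω → T) (Z : Ω → U) : Prop :=
  ∀ (x : S) (y : T) (z : U),
    pr μ (fun ω => (X ω, Y ω, Z ω)) (x, y, z) * pr μ Z z =
      pr μ (fun ω => (X ω, Z ω)) (x, z) * pr μ (fun ω => (Y ω, Z ω)) (y, z)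

open InformationTheory

section Probability

variable {S T U : Type*} {μ : Measure Ω}

def MeasurableFibers (X : Ω → S) : Prop :=
  ∀ x, MeasurableSet {ω | X ω = x}

lemma measurableFibers_of_measurable [MeasurableSpace S] [MeasurableSingletonClass S]
    {X : Ω → S} (hX : Measurable X) : MeasurableFibers X :=
  fun x => hX (measurableSet_singleton x)

namespace MeasurableFibers

variable {X : Ω → S} {Y : Ω → T}

lemma prodMk (hX : MeasurableFibers X) (hY : MeasurableFibers Y) :
    MeasurableFibers (fun ω => (X ω, Y ω)) := by
  rintro ⟨x, y⟩
  simpa only [Prod.mk.injEq, Set.ofPred_and] using (hX x).inter (hY y)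

lemma comp [Finite S] (hX : MeasurableFibers X) (φ : S → U) :
    MeasurableFibers (fun ω => φ (X ω)) := by
  intro u
  have : {ω | φ (X ω) = u} = ⋃ x ∈ φ ⁻¹' {u}, {ω | X ω = x} := by ext; simp
  rw [this]
  exact .biUnion (Set.to_countable _) fun x _ => hX x

end MeasurableFibers

lemma pr_eq_measureReal (X : Ω → S) (x : S) : pr μ X x = μ.real (X ⁻¹' {x}) := rfl

lemma pr_nonneg (X : Ω → S) (x : S) : 0 ≤ pr μ X x :=
  ENNReal.toReal_nonneg

lemma pr_pair_le_left [IsFiniteMeasure μ] (X : Ω → S) (Y : Ω → T) (x : S) (y : T) :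
    pr μ (fun ω => (X ω, Y ω)) (x, y) ≤ pr μ X x :=
  measureReal_mono fun _ h => congrArg Prod.fst h

lemma pr_pair_le_right [IsFiniteMeasure μ] (X : Ω → S) (Y : Ω → T) (x : S) (y : T) :
    pr μ (fun ω => (X ω, Y ω)) (x, y) ≤ pr μ Y y :=
  measureReal_mono fun _ h => congrArg Prod.snd h

lemma pr_pair_eq_zero_of_mul_eq_zero [IsFiniteMeasure μ] {X : Ω → S} {Y : Ω → T} {x : S} {y : T}
    (h : pr μ X x * pr μ Y y = 0) : pr μ (fun ω => (X ω, Y ω)) (x, y) = 0 := by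
  rcases mul_eq_zero.1 h with h | h
  · exact le_antisymm (h ▸ pr_pair_le_left X Y x y) (pr_nonneg _ _)
  · exact le_antisymm (h ▸ pr_pair_le_right X Y x y) (pr_nonneg _ _)

lemma pr_pair_swap (X : Ω → S) (Y : Ω → T) (x : S) (y : T) :
    pr μ (fun ω => (Y ω, X ω)) (y, x) = pr μ (fun ω => (X ω, Y ω)) (x, y) := by
  simp only [pr, Prod.mk.injEq, and_comm]

lemma pr_comp [IsFiniteMeasure μ] [Fintype S] [DecidableEq U] {X : Ω → S}
    (hX : MeasurableFibers X) (φ : S → U) (u : U) :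
    pr μ (fun ω => φ (X ω)) u = ∑ x with φ x = u, pr μ X x := by
  simp only [pr_eq_measureReal]
  rw [sum_measureReal_preimage_singleton (μ := μ) _ fun x _ => hX x]
  congr 1; ext; simp

lemma sum_pr [IsProbabilityMeasure μ] [Fintype S] {X : Ω → S} (hX : MeasurableFibers X) :
    ∑ x, pr μ X x = 1 := by
  simp only [pr_eq_measureReal]
  simpa using sum_measureReal_preimage_singleton (μ := μ) Finset.univ fun x _ => hX x

lemma sum_pr_pair [IsFiniteMeasure μ] [Fintype S] [Fintype T] {X : Ω → S} {Y : Ω → T}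
    (hX : MeasurableFibers X) (hY : MeasurableFibers Y) (x : S) :
    ∑ y, pr μ (fun ω => (X ω, Y ω)) (x, y) = pr μ X x := by
  classical
  have := pr_comp (μ := μ) (hX.prodMk hY) Prod.fst x
  rw [Finset.sum_filter, Fintype.sum_prod_type, Finset.sum_comm] at this
  simpa using this.symm

lemma pr_pair_eq_pr_mul_pr_cond [IsFiniteMeasure μ] {Z : Ω → U} (hZ : MeasurableFibers Z)
    (X : Ω → S) (x : S) (z : U) :
    pr μ (fun ω => (X ω, Z ω)) (x, z) = pr μ Z z * pr μ[|{ω | Z ω = z}] X x := by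
  simp only [pr, ← ENNReal.toReal_mul, mul_comm (μ _), cond_mul_eq_inter (hZ z)]
  congr 2; ext; simp [and_comm]

lemma sum_pr_mul_pr_cond [IsFiniteMeasure μ] [Fintype S] [Fintype U] {X : Ω → S} {Z : Ω → U}
    (hX : MeasurableFibers X) (hZ : MeasurableFibers Z) (x : S) :
    ∑ z, pr μ Z z * pr μ[|{ω | Z ω = z}] X x = pr μ X x := by
  simp_rw [← pr_pair_eq_pr_mul_pr_cond hZ]
  exact sum_pr_pair hX hZ x

lemma isProbabilityMeasure_cond_of_pr_ne_zero [IsFiniteMeasure μ] {Z : Ω → U} {z : U}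
    (hz : pr μ Z z ≠ 0) : IsProbabilityMeasure μ[|{ω | Z ω = z}] :=
  cond_isProbabilityMeasure fun h => hz (by simp [pr, h])

def PrIndep (μ : Measure Ω) (X : Ω → S) (Y : Ω → T) : Prop :=
  ∀ x y, pr μ (fun ω => (X ω, Y ω)) (x, y) = pr μ X x * pr μ Y y

lemma PrIndep.symm {X : Ω → S} {Y : Ω → T} (h : PrIndep μ X Y) : PrIndep μ Y X :=
  fun y x => by rw [pr_pair_swap, h, mul_comm]

lemma prIndep_iff_pr_cond [IsFiniteMeasure μ] {X : Ω → S} {Z : Ω → U}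
    (hZ : MeasurableFibers Z) :
    PrIndep μ X Z ↔ ∀ z, pr μ Z z ≠ 0 → ∀ x, pr μ[|{ω | Z ω = z}] X x = pr μ X x := by
  simp only [PrIndep, pr_pair_eq_pr_mul_pr_cond hZ]
  refine ⟨fun h z hz x => mul_left_cancel₀ hz ((h x z).trans (mul_comm _ _)), fun h x z => ?_⟩
  by_cases hz : pr μ Z z = 0
  · simp [hz]
  · rw [h z hz x, mul_comm]

lemma PrIndep.comp_left [IsFiniteMeasure μ] [Fintype S] {X : Ω → S} {Y : Ω → T}
    (h : PrIndep μ X Y) (hX : MeasurableFibers X) (hY : MeasurableFibers Y) (ψ : S → U) :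
    PrIndep μ (fun ω => ψ (X ω)) Y := by
  classical
  rw [prIndep_iff_pr_cond hY] at h ⊢
  intro y hy u
  have := isProbabilityMeasure_cond_of_pr_ne_zero hy
  rw [pr_comp hX, pr_comp hX]
  exact Finset.sum_congr rfl fun x _ => h y hy x

lemma PrIndep.of_cond [IsFiniteMeasure μ] [Fintype S] [Fintype T] [Fintype U]
    {X : Ω → S} {Y : Ω → T} {Z : Ω → U}
    (hX : MeasurableFibers X) (hY : MeasurableFibers Y) (hZ : MeasurableFibers Z)
    (hXY : ∀ z, pr μ Z z ≠ 0 → PrIndep μ[|{ω | Z ω = z}] X Y) (hYZ : PrIndep μ Y Z) :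
    PrIndep μ X Y := by
  intro x y
  rw [← sum_pr_mul_pr_cond (hX.prodMk hY) hZ, ← sum_pr_mul_pr_cond hX hZ, Finset.sum_mul]
  refine Finset.sum_congr rfl fun z _ => ?_
  by_cases hz : pr μ Z z = 0
  · simp [hz]
  · rw [hXY z hz, (prIndep_iff_pr_cond hZ).1 hYZ z hz, mul_assoc]

end Probability

lemma mul_log_sub_mul_log_sub_mul_log {r a b : ℝ} (h : r ≠ 0 → a ≠ 0 ∧ b ≠ 0) :
    r * Real.log r - r * Real.log a - r * Real.log b = a * b * klFun (r / (a * b)) + r - a * b := by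
  rcases eq_or_ne r 0 with rfl | hr
  · simp [klFun_zero]
  · obtain ⟨ha, hb⟩ := h hr
    rw [klFun_apply, Real.log_div hr (mul_ne_zero ha hb), Real.log_mul ha hb]
    field_simp
    ring

lemma mul_klFun_div_eq_zero_iff {r q : ℝ} (hr : 0 ≤ r) (hq : 0 ≤ q) (h : q = 0 → r = 0) :
    q * klFun (r / q) = 0 ↔ r = q := by
  rcases hq.eq_or_lt with rfl | hq
  · simp [h rfl]
  · rw [mul_eq_zero, klFun_eq_zero_iff (div_nonneg hr hq.le), div_eq_one_iff_eq hq.ne']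
    simp [hq.ne']

section Information

variable {S T U : Type*} {μ : Measure Ω} {X : Ω → S} {Y : Ω → T}

lemma mul_klFun_pr_nonneg (p : S × T) : 0 ≤ pr μ X p.1 * pr μ Y p.2 *
    klFun (pr μ (fun ω => (X ω, Y ω)) p / (pr μ X p.1 * pr μ Y p.2)) := by
  have hq := mul_nonneg (pr_nonneg (μ := μ) X p.1) (pr_nonneg (μ := μ) Y p.2)
  exact mul_nonneg hq (klFun_nonneg (div_nonneg (pr_nonneg _ _) hq))

variable [Fintype S] [Fintype T]

lemma sum_pr_pair_mul_left [IsFiniteMeasure μ] (hX : MeasurableFibers X)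
    (hY : MeasurableFibers Y) (g : S → ℝ) :
    ∑ p : S × T, pr μ (fun ω => (X ω, Y ω)) p * g p.1 = ∑ x, pr μ X x * g x := by
  simp_rw [Fintype.sum_prod_type, ← Finset.sum_mul, sum_pr_pair hX hY]

lemma sum_pr_pair_mul_right [IsFiniteMeasure μ] (hX : MeasurableFibers X)
    (hY : MeasurableFibers Y) (g : T → ℝ) :
    ∑ p : S × T, pr μ (fun ω => (X ω, Y ω)) p * g p.2 = ∑ y, pr μ Y y * g y := by
  simp_rw [Fintype.sum_prod_type_right, ← Finset.sum_mul, ← pr_pair_swap X Y,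
    sum_pr_pair hY hX]

lemma MI_eq_sum_mul_klFun [IsProbabilityMeasure μ] (hX : MeasurableFibers X)
    (hY : MeasurableFibers Y) :
    MI μ X Y = ∑ p : S × T, pr μ X p.1 * pr μ Y p.2 *
      klFun (pr μ (fun ω => (X ω, Y ω)) p / (pr μ X p.1 * pr μ Y p.2)) := by
  set P := pr μ (fun ω => (X ω, Y ω))
  have hQ : ∑ p : S × T, pr μ X p.1 * pr μ Y p.2 = 1 := by
    rw [Fintype.sum_prod_type, ← Finset.sum_mul_sum, sum_pr hX, sum_pr hY, one_mul]
  calc MI μ X Y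
    _ = ∑ p : S × T, (P p * Real.log (P p) - P p * Real.log (pr μ X p.1)
        - P p * Real.log (pr μ Y p.2)) := by
      rw [MI, H, H, H, ← sum_pr_pair_mul_left hX hY, ← sum_pr_pair_mul_right hX hY]
      simp only [Finset.sum_sub_distrib]
      ring
    _ = ∑ p : S × T, (pr μ X p.1 * pr μ Y p.2 * klFun (P p / (pr μ X p.1 * pr μ Y p.2))
        + P p - pr μ X p.1 * pr μ Y p.2) :=
      Finset.sum_congr rfl fun p _ => mul_log_sub_mul_log_sub_mul_log fun hp =>
        mul_ne_zero_iff.1 (mt pr_pair_eq_zero_of_mul_eq_zero hp)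
    _ = _ := by
      rw [Finset.sum_sub_distrib, Finset.sum_add_distrib, sum_pr (hX.prodMk hY), hQ]
      ring

lemma MI_nonneg [IsProbabilityMeasure μ] (hX : MeasurableFibers X) (hY : MeasurableFibers Y) :
    0 ≤ MI μ X Y := by
  rw [MI_eq_sum_mul_klFun hX hY]
  exact Finset.sum_nonneg fun p _ => mul_klFun_pr_nonneg p

lemma MI_eq_zero_iff [IsProbabilityMeasure μ] (hX : MeasurableFibers X)
    (hY : MeasurableFibers Y) : MI μ X Y = 0 ↔ PrIndep μ X Y := by
  rw [MI_eq_sum_mul_klFun hX hY,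
    Finset.sum_eq_zero_iff_of_nonneg fun p _ => mul_klFun_pr_nonneg p]
  simp only [Finset.mem_univ, true_implies, Prod.forall, PrIndep]
  exact forall₂_congr fun x y => mul_klFun_div_eq_zero_iff (pr_nonneg _ _)
    (mul_nonneg (pr_nonneg _ _) (pr_nonneg _ _)) pr_pair_eq_zero_of_mul_eq_zero

lemma MI_cond_eq_zero_of_CMI_eq_zero [IsFiniteMeasure μ] [Fintype U] {Z : Ω → U}
    (hX : MeasurableFibers X) (hY : MeasurableFibers Y) (h : CMI μ X Y Z = 0) {z : U}
    (hz : pr μ Z z ≠ 0) : MI μ[|{ω | Z ω = z}] X Y = 0 := by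
  have hterm_nonneg : ∀ z ∈ Finset.univ, 0 ≤ pr μ Z z * MI μ[|{ω | Z ω = z}] X Y := by
    intro z _
    rcases eq_or_ne (pr μ Z z) 0 with hz | hz
    · simp [hz]
    · have := isProbabilityMeasure_cond_of_pr_ne_zero hz
      exact mul_nonneg (pr_nonneg _ _) (MI_nonneg hX hY)
  have hterm := (Finset.sum_eq_zero_iff_of_nonneg hterm_nonneg).1 h z (Finset.mem_univ z)
  exact (mul_eq_zero.1 hterm).resolve_left hz

end Information

theorem MI_comp_eq_zero_of_CMI_eq_zero {S U A B : Type*} [Fintype S] [Fintype U] [Fintype A]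
    [Fintype B] {μ : Measure Ω} [IsProbabilityMeasure μ] {X : Ω → S} {Z : Ω → U}
    (hX : MeasurableFibers X) (hZ : MeasurableFibers Z) {φ : S → A} {ψ : S → B}
    (hφ : CMI μ X (fun ω => φ (X ω)) Z = 0) (hψ : MI μ Z (fun ω => ψ (X ω)) = 0) :
    MI μ (fun ω => φ (X ω)) (fun ω => ψ (X ω)) = 0 := by
  have hφX := hX.comp φ
  have hψX := hX.comp ψ
  rw [MI_eq_zero_iff hφX hψX]
  refine PrIndep.of_cond hφX hψX hZ (fun z hz => ?_) ((MI_eq_zero_iff hZ hψX).1 hψ).symm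
  have := isProbabilityMeasure_cond_of_pr_ne_zero hz
  have hXφX := (MI_eq_zero_iff hX hφX).1 (MI_cond_eq_zero_of_CMI_eq_zero hX hφX hφ hz)
  exact (hXφX.comp_left hX hφX ψ).symm

theorem mutual_disentanglement_general
    {SV ST AS AX BS BX : Type*}
    [Fintype SV] [MeasurableSpace SV] [MeasurableSingletonClass SV]
    [Fintype ST] [MeasurableSpace ST] [MeasurableSingletonClass ST]
    [Fintype AS] [Fintype AX]
    [Fintype BS] [Fintype BX]
    (μ : Measure Ω) [IsProbabilityMeasure μ]
    (V : Ω → SV) (T : Ω → ST)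
    (hV : Measurable V) (hT : Measurable T)
    (fS : SV → AS) (fX : SV → AX) (gS : ST → BS) (gX : ST → BX) :
    ((CMI μ V (fun ω => fS (V ω)) T = 0 → MI μ T (fun ω => fX (V ω)) = 0 →
        MI μ (fun ω => fS (V ω)) (fun ω => fX (V ω)) = 0) ∧
      (CMI μ T (fun ω => gS (T ω)) V = 0 → MI μ V (fun ω => gX (T ω)) = 0 →
        MI μ (fun ω => gS (T ω)) (fun ω => gX (T ω)) = 0)) :=
  ⟨MI_comp_eq_zero_of_CMI_eq_zero (measurableFibers_of_measurable hV)
      (measurableFibers_of_measurable hT),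
    MI_comp_eq_zero_of_CMI_eq_zero (measurableFibers_of_measurable hT)
      (measurableFibers_of_measurable hV)⟩

/-- **Mutual disentanglement.** If `V_S = f_S(V)` and `V_X = f_X(V)` satisfy
`I(V; V_S | T) = 0` and `I(T; V_X) = 0`, then `I(V_S; V_X) = 0`; and symmetrically: if
`T_S = g_S(T)` and `T_X = g_X(T)` satisfy `I(T; T_S | V) = 0` and `I(V; T_X) = 0`,
then `I(T_S; T_X) = 0`. -/
theorem mutual_disentanglement
    {SV ST AS AX BS BX : Type*}
    [Fintype SV] [Nonempty SV] [MeasurableSpace SV] [MeasurableSingletonClass SV]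
    [Fintype ST] [Nonempty ST] [MeasurableSpace ST] [MeasurableSingletonClass ST]
    [Fintype AS] [Nonempty AS] [Fintype AX] [Nonempty AX]
    [Fintype BS] [Nonempty BS] [Fintype BX] [Nonempty BX]
    (μ : Measure Ω) [IsProbabilityMeasure μ]
    (V : Ω → SV) (T : Ω → ST)
    (hV : Measurable V) (hT : Measurable T)
    (fS : SV → AS) (fX : SV → AX) (gS : ST → BS) (gX : ST → BX) :
    ((CMI μ V (fun ω => fS (V ω)) T = 0 → MI μ T (fun ω => fX (V ω)) = 0 →
        MI μ (fun ω => fS (V ω)) (fun ω => fX (V ω)) = 0) ∧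
      (CMI μ T (fun ω => gS (T ω)) V = 0 → MI μ V (fun ω => gX (T ω)) = 0 →
        MI μ (fun ω => gS (T ω)) (fun ω => gX (T ω)) = 0)) :=
  mutual_disentanglement_general μ V T hV hT fS fX gS gX

end DisNCL
end

section
/- (Minimal sufficiency of the modality-exclusive representation.) Let V, T, V_X be random variables with V_X conditionally independent of T given V. If I(V; V_X | T) = H(V | T) and I(T; V_X) = 0, then I(V; V_X) = H(V | T). Symmetrically, if T_X is conditionally independent of V given T, I(T; T_X | V) = H(T | V), and I(V; T_X) = 0, then I(T; T_X) = H(T | V). -/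
open MeasureTheory ProbabilityTheory

namespace DisNCL

variable {Ω : Type*} [MeasurableSpace Ω]

/-! Both ways of splitting `I(X, Z; W)` by the chain rule give
`I(X; W) + I(Z; W | X) = I(Z; W) + I(X; W | Z)`, which is checked by expanding every term into
joint entropies. If `W ⊥ Z | X`, then `Z` and `W` are independent under each conditional measure
given `X = x`, so `I(Z; W | X) = 0`; with `I(Z; W) = 0` and `I(X; W | Z) = H(X | Z)` this gives
`I(X; W) = H(X | Z)`. -/

open Real

section

variable {μ : Measure Ω}

lemma pr_congr {S S' : Type*} {X : Ω → S} {Y : Ω → S'} {x : S} {y : S'}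
    (h : ∀ ω, X ω = x ↔ Y ω = y) : pr μ X x = pr μ Y y := by
  simp only [pr, h]

lemma sum_pr_eq_one {S : Type*} [Fintype S] [MeasurableSpace S] [MeasurableSingletonClass S]
    [IsProbabilityMeasure μ] {X : Ω → S} (hX : Measurable X) : ∑ x, pr μ X x = 1 := by
  have h := sum_measure_preimage_singleton (μ := μ) Finset.univ
    fun x _ => hX (measurableSet_singleton x)
  rw [Finset.coe_univ, Set.preimage_univ, measure_univ] at h
  simp only [pr]
  rw [← ENNReal.toReal_sum fun x _ => measure_ne_top μ _, ← ENNReal.toReal_one]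
  exact congrArg ENNReal.toReal h

lemma pr_eq_sum_pr_prod {S T : Type*} [Fintype S]
    [MeasurableSpace S] [MeasurableSingletonClass S]
    [MeasurableSpace T] [MeasurableSingletonClass T] [IsFiniteMeasure μ]
    {X : Ω → S} {Y : Ω → T} (hX : Measurable X) (hY : Measurable Y) (y : T) :
    pr μ Y y = ∑ x, pr μ (fun ω => (X ω, Y ω)) (x, y) := by
  have h := sum_measure_preimage_singleton (μ := μ) (Finset.univ ×ˢ {y})
    fun p _ => (hX.prodMk hY) (measurableSet_singleton p)
  rw [Finset.sum_product, Finset.coe_product, Finset.coe_univ, Finset.coe_singleton,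
    Set.mk_preimage_prod, Set.preimage_univ, Set.univ_inter] at h
  simp only [Finset.sum_singleton] at h
  simp only [pr]
  rw [← ENNReal.toReal_sum fun x _ => measure_ne_top μ _]
  exact congrArg ENNReal.toReal h.symm

lemma H_eq_sum_negMulLog {S : Type*} [Fintype S] (X : Ω → S) :
    H μ X = ∑ x, negMulLog (pr μ X x) := by
  simp only [H, negMulLog, neg_mul, Finset.sum_neg_distrib]

lemma H_comp_equiv {S S' : Type*} [Fintype S] [Fintype S'] (X : Ω → S) (e : S ≃ S') :
    H μ (fun ω => e (X ω)) = H μ X := by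
  simp only [H_eq_sum_negMulLog]
  exact (Fintype.sum_equiv e _ _ fun x => by rw [pr_congr fun ω => e.apply_eq_iff_eq]).symm

lemma H_prod_comm {S T : Type*} [Fintype S] [Fintype T] (X : Ω → S) (Y : Ω → T) :
    H μ (fun ω => (Y ω, X ω)) = H μ (fun ω => (X ω, Y ω)) :=
  H_comp_equiv (fun ω => (X ω, Y ω)) (Equiv.prodComm S T)

lemma pr_cond_mul_pr {S U : Type*} [MeasurableSpace U] [MeasurableSingletonClass U]
    [IsFiniteMeasure μ] (X : Ω → S) {Z : Ω → U} (hZ : Measurable Z) (x : S) (z : U) :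
    pr (μ[|{ω | Z ω = z}]) X x * pr μ Z z = pr μ (fun ω => (X ω, Z ω)) (x, z) := by
  have hset : {ω | (X ω, Z ω) = (x, z)} = {ω | Z ω = z} ∩ {ω | X ω = x} := by
    ext ω; simp [Prod.ext_iff, and_comm]
  have hms : MeasurableSet {ω | Z ω = z} := hZ (measurableSet_singleton z)
  simp only [pr]
  rw [← ENNReal.toReal_mul, cond_apply hms, hset, mul_comm _⁻¹,
    ENNReal.inv_mul_cancel_right' (fun h => measure_inter_null_of_null_left _ h)
      fun h => absurd h (measure_ne_top μ _)]

lemma condH_eq_H_prod_sub_H {S U : Type*} [Fintype S] [Fintype U]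
    [MeasurableSpace S] [MeasurableSingletonClass S]
    [MeasurableSpace U] [MeasurableSingletonClass U] [IsFiniteMeasure μ]
    {X : Ω → S} {Z : Ω → U} (hX : Measurable X) (hZ : Measurable Z) :
    condH μ X Z = H μ (fun ω => (X ω, Z ω)) - H μ Z := by
  have fiber : ∀ z, ∑ x, negMulLog (pr μ (fun ω => (X ω, Z ω)) (x, z))
      = pr μ Z z * H (μ[|{ω | Z ω = z}]) X + negMulLog (pr μ Z z) := by
    intro z
    have hsum : ∑ x, pr (μ[|{ω | Z ω = z}]) X x * pr μ Z z = pr μ Z z := by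
      simp only [pr_cond_mul_pr X hZ]
      exact (pr_eq_sum_pr_prod hX hZ z).symm
    simp only [← pr_cond_mul_pr X hZ, negMulLog_mul, Finset.sum_add_distrib, ← Finset.mul_sum,
      ← H_eq_sum_negMulLog, ← Finset.sum_mul]
    congr 1
    calc (∑ x, pr (μ[|{ω | Z ω = z}]) X x) * negMulLog (pr μ Z z)
        = -(∑ x, pr (μ[|{ω | Z ω = z}]) X x * pr μ Z z) * log (pr μ Z z) := by
          simp only [negMulLog, Finset.sum_mul, neg_mul, mul_neg, mul_assoc]
      _ = negMulLog (pr μ Z z) := by rw [hsum, negMulLog]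
  rw [condH, H_eq_sum_negMulLog (fun ω => (X ω, Z ω)), Fintype.sum_prod_type, Finset.sum_comm]
  simp only [fiber, Finset.sum_add_distrib, ← H_eq_sum_negMulLog]
  ring

lemma CMI_eq_H {S T U : Type*} [Fintype S] [Fintype T] [Fintype U]
    [MeasurableSpace S] [MeasurableSingletonClass S]
    [MeasurableSpace T] [MeasurableSingletonClass T]
    [MeasurableSpace U] [MeasurableSingletonClass U] [IsFiniteMeasure μ]
    {X : Ω → S} {Y : Ω → T} {Z : Ω → U}
    (hX : Measurable X) (hY : Measurable Y) (hZ : Measurable Z) :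
    CMI μ X Y Z = H μ (fun ω => (X ω, Z ω)) + H μ (fun ω => (Y ω, Z ω)) - H μ Z
      - H μ (fun ω => ((X ω, Y ω), Z ω)) := by
  have hcondH : CMI μ X Y Z = condH μ X Z + condH μ Y Z - condH μ (fun ω => (X ω, Y ω)) Z := by
    simp only [CMI, MI, condH, mul_add, mul_sub, Finset.sum_add_distrib, Finset.sum_sub_distrib]
  rw [hcondH, condH_eq_H_prod_sub_H hX hZ, condH_eq_H_prod_sub_H hY hZ,
    condH_eq_H_prod_sub_H (hX.prodMk hY) hZ]
  ring

lemma MI_eq_zero_of_pr_prod_eq_mul {S T : Type*} [Fintype S] [Fintype T]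
    [MeasurableSpace S] [MeasurableSingletonClass S]
    [MeasurableSpace T] [MeasurableSingletonClass T] [IsProbabilityMeasure μ]
    {X : Ω → S} {Y : Ω → T} (hX : Measurable X) (hY : Measurable Y)
    (h : ∀ x y, pr μ (fun ω => (X ω, Y ω)) (x, y) = pr μ X x * pr μ Y y) : MI μ X Y = 0 := by
  have hH : H μ (fun ω => (X ω, Y ω)) = H μ X + H μ Y := by
    simp only [H_eq_sum_negMulLog, Fintype.sum_prod_type, h, negMulLog_mul,
      Finset.sum_add_distrib, ← Finset.sum_mul, ← Finset.mul_sum, sum_pr_eq_one hX,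
      sum_pr_eq_one hY]
    ring
  rw [MI, hH]
  ring

namespace CondIndep

variable {S T U : Type*} {X : Ω → S} {Y : Ω → T} {Z : Ω → U}

lemma symm (h : CondIndep μ X Y Z) : CondIndep μ Y X Z := by
  intro y x z
  have hswap : pr μ (fun ω => (Y ω, X ω, Z ω)) (y, x, z)
      = pr μ (fun ω => (X ω, Y ω, Z ω)) (x, y, z) :=
    pr_congr fun ω => by simp only [Prod.ext_iff]; tauto
  rw [hswap, h x y z, mul_comm]

lemma pr_cond_prod_eq_mul [MeasurableSpace U] [MeasurableSingletonClass U] [IsFiniteMeasure μ]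
    (h : CondIndep μ X Y Z) (hZ : Measurable Z) {z : U} (hz : pr μ Z z ≠ 0) (x : S) (y : T) :
    pr (μ[|{ω | Z ω = z}]) (fun ω => (X ω, Y ω)) (x, y)
      = pr (μ[|{ω | Z ω = z}]) X x * pr (μ[|{ω | Z ω = z}]) Y y := by
  apply mul_right_cancel₀ (mul_ne_zero hz hz)
  calc pr (μ[|{ω | Z ω = z}]) (fun ω => (X ω, Y ω)) (x, y) * (pr μ Z z * pr μ Z z)
      = pr μ (fun ω => ((X ω, Y ω), Z ω)) ((x, y), z) * pr μ Z z := by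
        rw [← pr_cond_mul_pr _ hZ]; ring
    _ = pr μ (fun ω => (X ω, Z ω)) (x, z) * pr μ (fun ω => (Y ω, Z ω)) (y, z) := by
        have hassoc : pr μ (fun ω => ((X ω, Y ω), Z ω)) ((x, y), z)
            = pr μ (fun ω => (X ω, Y ω, Z ω)) (x, y, z) :=
          pr_congr fun ω => by simp only [Prod.ext_iff, and_assoc]
        rw [hassoc, h x y z]
    _ = _ := by rw [← pr_cond_mul_pr X hZ, ← pr_cond_mul_pr Y hZ]; ring

lemma CMI_eq_zero [Fintype S] [Fintype T] [Fintype U]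
    [MeasurableSpace S] [MeasurableSingletonClass S]
    [MeasurableSpace T] [MeasurableSingletonClass T]
    [MeasurableSpace U] [MeasurableSingletonClass U] [IsFiniteMeasure μ]
    (h : CondIndep μ X Y Z) (hX : Measurable X) (hY : Measurable Y) (hZ : Measurable Z) :
    CMI μ X Y Z = 0 := by
  refine Finset.sum_eq_zero fun z _ => ?_
  by_cases hz : pr μ Z z = 0
  · rw [hz, zero_mul]
  · have : IsProbabilityMeasure (μ[|{ω | Z ω = z}]) :=
      cond_isProbabilityMeasure fun h0 => hz (by rw [pr, h0, ENNReal.toReal_zero])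
    rw [MI_eq_zero_of_pr_prod_eq_mul hX hY (h.pr_cond_prod_eq_mul hZ hz), mul_zero]

end CondIndep

lemma MI_add_CMI_eq_MI_add_CMI {S T U : Type*} [Fintype S] [Fintype T] [Fintype U]
    [MeasurableSpace S] [MeasurableSingletonClass S]
    [MeasurableSpace T] [MeasurableSingletonClass T]
    [MeasurableSpace U] [MeasurableSingletonClass U] [IsFiniteMeasure μ]
    {X : Ω → S} {Z : Ω → T} {W : Ω → U}
    (hX : Measurable X) (hZ : Measurable Z) (hW : Measurable W) :
    MI μ X W + CMI μ Z W X = MI μ Z W + CMI μ X W Z := by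
  have hswap : H μ (fun ω => ((Z ω, W ω), X ω)) = H μ (fun ω => ((X ω, W ω), Z ω)) :=
    H_comp_equiv (fun ω => ((X ω, W ω), Z ω))
      ⟨fun p => ((p.2, p.1.2), p.1.1), fun p => ((p.2, p.1.2), p.1.1),
        fun _ => rfl, fun _ => rfl⟩
  rw [CMI_eq_H hZ hW hX, CMI_eq_H hX hW hZ, MI, MI, H_prod_comm X Z, H_prod_comm X W,
    H_prod_comm Z W, hswap]
  ring

lemma MI_eq_MI_add_CMI_of_condIndep {S T U : Type*} [Fintype S] [Fintype T] [Fintype U]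
    [MeasurableSpace S] [MeasurableSingletonClass S]
    [MeasurableSpace T] [MeasurableSingletonClass T]
    [MeasurableSpace U] [MeasurableSingletonClass U] [IsFiniteMeasure μ]
    {X : Ω → S} {Z : Ω → T} {W : Ω → U}
    (hX : Measurable X) (hZ : Measurable Z) (hW : Measurable W) (h : CondIndep μ W Z X) :
    MI μ X W = MI μ Z W + CMI μ X W Z := by
  rw [← MI_add_CMI_eq_MI_add_CMI hX hZ hW, h.symm.CMI_eq_zero hZ hW hX, add_zero]

end

theorem minimal_sufficiency_modality_exclusive_general
    {SV ST SVX STX : Type*}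
    [Fintype SV] [MeasurableSpace SV] [MeasurableSingletonClass SV]
    [Fintype ST] [MeasurableSpace ST] [MeasurableSingletonClass ST]
    [Fintype SVX] [MeasurableSpace SVX] [MeasurableSingletonClass SVX]
    [Fintype STX] [MeasurableSpace STX] [MeasurableSingletonClass STX]
    (μ : Measure Ω) [IsProbabilityMeasure μ]
    (V : Ω → SV) (T : Ω → ST) (VX : Ω → SVX) (TX : Ω → STX)
    (hV : Measurable V) (hT : Measurable T) (hVX : Measurable VX) (hTX : Measurable TX) :
    ((CondIndep μ VX T V → CMI μ V VX T = condH μ V T → MI μ T VX = 0 →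
        MI μ V VX = condH μ V T) ∧
      (CondIndep μ TX V T → CMI μ T TX V = condH μ T V → MI μ V TX = 0 →
        MI μ T TX = condH μ T V)) :=
  ⟨fun hci hcmi hmi => by rw [MI_eq_MI_add_CMI_of_condIndep hV hT hVX hci, hmi, hcmi, zero_add],
    fun hci hcmi hmi => by rw [MI_eq_MI_add_CMI_of_condIndep hT hV hTX hci, hmi, hcmi, zero_add]⟩

/-- **Minimal sufficiency of the modality-exclusive representation.**
If `V_X ⊥ T | V`, `I(V; V_X | T) = H(V | T)` and `I(T; V_X) = 0`, then
`I(V; V_X) = H(V | T)`; symmetrically, if `T_X ⊥ V | T`, `I(T; T_X | V) = H(T | V)` and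
`I(V; T_X) = 0`, then `I(T; T_X) = H(T | V)`. -/
theorem minimal_sufficiency_modality_exclusive
    {SV ST SVX STX : Type*}
    [Fintype SV] [Nonempty SV] [MeasurableSpace SV] [MeasurableSingletonClass SV]
    [Fintype ST] [Nonempty ST] [MeasurableSpace ST] [MeasurableSingletonClass ST]
    [Fintype SVX] [Nonempty SVX] [MeasurableSpace SVX] [MeasurableSingletonClass SVX]
    [Fintype STX] [Nonempty STX] [MeasurableSpace STX] [MeasurableSingletonClass STX]
    (μ : Measure Ω) [IsProbabilityMeasure μ]
    (V : Ω → SV) (T : Ω → ST) (VX : Ω → SVX) (TX : Ω → STX)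
    (hV : Measurable V) (hT : Measurable T) (hVX : Measurable VX) (hTX : Measurable TX) :
    ((CondIndep μ VX T V → CMI μ V VX T = condH μ V T → MI μ T VX = 0 →
        MI μ V VX = condH μ V T) ∧
      (CondIndep μ TX V T → CMI μ T TX V = condH μ T V → MI μ V TX = 0 →
        MI μ T TX = condH μ T V)) :=
  minimal_sufficiency_modality_exclusive_general μ V T VX TX hV hT hVX hTX

end DisNCL
end
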